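/- Let κ ∈ ℕ and n ≥ κ. Let a ∈ L^1(𝕋) have Fourier coefficients {a_k} and suppose T_n(a) = (a_{j−k})_{j,k=0}^n is invertible. Then the determinant of the κ×κ upper-right corner block of T_n^{-1}(a) (rows 0,…,κ−1 and columns n−κ+1,…,n) equals (−1)^{nκ} D_{n−κ}[a(t)t^{κ}]/D_n(a), where D_m[a(t)t^{κ}] = det(a_{j−k−κ})_{j,k=0}^m. -/

import Mathlib

/-!
Jacobi's complementary-minor identity: for an invertible `A` indexed by `α ⊕ β`,
`A * [P 0; Q 1] = [1 A₁₂; 0 A₂₂]`, where `[P; Q]` is the `α`-column block of `A⁻¹`, so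
`det A · det (A⁻¹)₁₁ = det A₂₂`. For the Toeplitz matrix `T`, split the rows into `{0, …, κ-1}` and
`{κ, …, n}` and cyclically shift the columns down by `κ`. Then the `(1,1)` block of the inverse is the
upper-right `κ × κ` corner of `T⁻¹`, the `(2,2)` block is `(a_{j-k-κ})_{j,k=0}^{n-κ}`, and the cyclic
shift contributes the sign `sign (finRotate (n+1))^κ = (-1)^(nκ)`.
-/

open Matrix Equiv

namespace Matrix

variable {α β R : Type*} [Fintype α] [Fintype β] [DecidableEq α] [DecidableEq β] [CommRing R]

theorem det_mul_det_toBlocks₁₁_inv (A : Matrix (α ⊕ β) (α ⊕ β) R) (hA : IsUnit A.det) :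
    A.det * (A⁻¹).toBlocks₁₁.det = A.toBlocks₂₂.det := by
  have hblocks := A.mul_nonsing_inv hA
  set B := A⁻¹
  rw [← fromBlocks_toBlocks A, ← fromBlocks_toBlocks B, fromBlocks_multiply,
    ← fromBlocks_one, fromBlocks_inj] at hblocks
  obtain ⟨h₁₁, -, h₂₁, -⟩ := hblocks
  have hprod : A * fromBlocks B.toBlocks₁₁ 0 B.toBlocks₂₁ 1 =
      fromBlocks 1 A.toBlocks₁₂ 0 A.toBlocks₂₂ := by
    conv_lhs => rw [← fromBlocks_toBlocks A]
    rw [fromBlocks_multiply, h₁₁, h₂₁]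
    simp
  simpa [det_fromBlocks_zero₁₂, det_fromBlocks_zero₂₁] using congrArg det hprod

theorem det_submatrix_equiv_trans_perm {ι : Type*} [Fintype ι] [DecidableEq ι]
    (M : Matrix ι ι R) (e : α ≃ ι) (σ : Perm ι) :
    (M.submatrix (e.trans σ) e).det = Perm.sign σ * M.det := by
  rw [← det_permute, ← det_submatrix_equiv_self e]
  rfl

end Matrix

open Fin.NatCast in
theorem finRotate_inv_pow_apply (n k : ℕ) (x : Fin (n + 1)) :
    ((finRotate (n + 1))⁻¹ ^ k) x = x - k := by
  induction k with
  | zero => simp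
  | succ k ih =>
    rw [pow_succ', Perm.mul_apply, ih, Perm.inv_eq_iff_eq, finRotate_apply]
    push_cast
    abel

theorem finRotate_inv_pow_apply_val {n k : ℕ} (hk : k < n + 1) (x : Fin (n + 1)) :
    (((finRotate (n + 1))⁻¹ ^ k) x : ℕ) = if k ≤ x then x - k else x + (n + 1) - k := by
  rw [finRotate_inv_pow_apply, Fin.val_sub, Fin.val_natCast, Nat.mod_eq_of_lt hk]
  split_ifs with hkx
  · rw [show n + 1 - k + x = x - k + (n + 1) by omega, Nat.add_mod_right,
      Nat.mod_eq_of_lt (by omega)]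
  · rw [Nat.mod_eq_of_lt (by omega)]
    omega

theorem stmt_14 (a : ℤ → ℂ) (n κ : ℕ) (hn : κ ≤ n)
    (T : Matrix (Fin (n + 1)) (Fin (n + 1)) ℂ)
    (hT : ∀ j k, T j k = a ((j.1 : ℤ) - (k.1 : ℤ)))
    (hinv : IsUnit T) :
    Matrix.det (Matrix.of fun i j : Fin κ =>
        T⁻¹ ⟨i.1, by have hi := i.isLt; omega⟩
            ⟨n - κ + 1 + j.1, by have hj := j.isLt; omega⟩) =
      (-1 : ℂ) ^ (n * κ) *
        (Matrix.det (Matrix.of fun j k : Fin (n - κ + 1) =>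
          a ((j.1 : ℤ) - (k.1 : ℤ) - (κ : ℤ))) / T.det) := by
  set m := n - κ + 1
  let s : Fin κ ⊕ Fin m ≃ Fin (n + 1) := finSumFinEquiv.trans (finCongr (by omega))
  let ρ : Perm (Fin (n + 1)) := (finRotate (n + 1))⁻¹ ^ κ
  have hρ_inl (i : Fin κ) : ρ (s (Sum.inl i)) = ⟨m + i, by omega⟩ := by
    ext
    rw [finRotate_inv_pow_apply_val (by omega)]
    simp only [s, trans_apply, finSumFinEquiv_apply_left, finCongr_apply, Fin.val_cast,
      Fin.val_castAdd, if_neg (Nat.not_le.mpr i.isLt)]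
    omega
  have hρ_inr (j : Fin m) : ρ (s (Sum.inr j)) = ⟨j, by omega⟩ := by
    ext
    rw [finRotate_inv_pow_apply_val (by omega)]
    simp [s]
  set A := T.submatrix (s.trans ρ) s
  have hdetA : A.det = (-1) ^ (n * κ) * T.det := by
    rw [det_submatrix_equiv_trans_perm, map_pow, Perm.sign_inv, sign_finRotate]
    push_cast
    ring
  have hcorner : (A⁻¹).toBlocks₁₁ = Matrix.of fun i j : Fin κ =>
      T⁻¹ ⟨i.1, by omega⟩ ⟨n - κ + 1 + j.1, by omega⟩ := by
    ext i j
    rw [inv_submatrix_equiv]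
    simp only [toBlocks₁₁, coe_trans, submatrix_apply, Function.comp_apply, hρ_inl, of_apply]
    rfl
  have hshifted : A.toBlocks₂₂ = Matrix.of fun j k : Fin m => a ((j.1 : ℤ) - k.1 - κ) := by
    ext j k
    simp only [A, toBlocks₂₂, of_apply, submatrix_apply, trans_apply, hρ_inr, hT]
    simp only [s, trans_apply, finSumFinEquiv_apply_right, finCongr_apply, Fin.val_cast,
      Fin.val_natAdd, Nat.cast_add]
    ring_nf
  have hT0 : T.det ≠ 0 := ((isUnit_iff_isUnit_det T).mp hinv).ne_zero
  have hjacobi := det_mul_det_toBlocks₁₁_inv A (by simp [hdetA, hT0])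
  rw [hcorner, hshifted, hdetA] at hjacobi
  rw [← hjacobi]
  field_simp
  simp [← pow_mul]
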